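/- For any convex body K in a Minkowski space, the Jung ratio satisfies j(K) ≤ s(K)/(s(K)+1), i.e. R(K)·(s(K)+1) ≤ D(K)·s(K), where s(K) is the Minkowski asymmetry. -/

import Mathlib

open Set Pointwise

/-- `V n` is `ℝ^n` (as a Euclidean space, also used as carrier for general
Minkowski spaces whose unit ball `B` is given as a set). -/
abbrev V (n : ℕ) := EuclideanSpace ℝ (Fin n)

/-- A convex body: compact, convex, with nonempty interior. -/
def IsConvexBody {n : ℕ} (K : Set (V n)) : Prop :=
  Convex ℝ K ∧ IsCompact K ∧ (interior K).Nonempty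

/-- A (centrally) symmetric unit ball of a norm. -/
def IsSymUnitBall {n : ℕ} (B : Set (V n)) : Prop :=
  IsConvexBody B ∧ B = -B

/-- Circumradius of `K` with respect to the unit ball `B`. -/
noncomputable def circum {n : ℕ} (B K : Set (V n)) : ℝ :=
  sInf {ρ : ℝ | 0 < ρ ∧ ∃ c : V n, K ⊆ c +ᵥ ρ • B}

/-- Inradius of `K` with respect to the unit ball `B`. -/
noncomputable def inrad {n : ℕ} (B K : Set (V n)) : ℝ :=
  sSup {ρ : ℝ | 0 < ρ ∧ ∃ c : V n, c +ᵥ ρ • B ⊆ K}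

/-- Diameter of `K` in the norm with unit ball `B` (via the Minkowski gauge). -/
noncomputable def mdiam {n : ℕ} (B K : Set (V n)) : ℝ :=
  sSup {d : ℝ | ∃ x ∈ K, ∃ y ∈ K, d = gauge B (x - y)}

/-- Minkowski asymmetry of `K`. -/
noncomputable def asym {n : ℕ} (K : Set (V n)) : ℝ :=
  sInf {ρ : ℝ | 0 < ρ ∧ ∃ c : V n, -K ⊆ c +ᵥ ρ • K}

/-- `K` is complete (diametrically maximal) w.r.t. the unit ball `B`. -/
def IsCompleteBody {n : ℕ} (B K : Set (V n)) : Prop :=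
  IsConvexBody K ∧ ∀ x : V n, x ∉ K → mdiam B K < mdiam B (K ∪ {x})

/-- `Kstar` is a completion of `K` w.r.t. the unit ball `B`. -/
def IsCompletionOf {n : ℕ} (B Kstar K : Set (V n)) : Prop :=
  IsCompleteBody B Kstar ∧ K ⊆ Kstar ∧ mdiam B Kstar = mdiam B K

/-- Jung ratio `R(K)/D(K)`. -/
noncomputable def jungRatio {n : ℕ} (B K : Set (V n)) : ℝ :=
  circum B K / mdiam B K

/-- Jung constant of the Minkowski space with unit ball `B`. -/
noncomputable def jungConst {n : ℕ} (B : Set (V n)) : ℝ :=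
  sSup {j : ℝ | ∃ K : Set (V n), IsConvexBody K ∧ j = jungRatio B K}

/-- Maximal Minkowski asymmetry over complete bodies. -/
noncomputable def asymConst {n : ℕ} (B : Set (V n)) : ℝ :=
  sSup {s : ℝ | ∃ K : Set (V n), IsCompleteBody B K ∧ s = asym K}

/-- Banach–Mazur distance between `K` and `C`. -/
noncomputable def dBM {n : ℕ} (K C : Set (V n)) : ℝ :=
  sInf {ρ : ℝ | 0 < ρ ∧ ∃ (A : (V n) ≃ᵃ[ℝ] (V n)) (x : V n),
    K ⊆ A '' C ∧ A '' C ⊆ x +ᵥ ρ • K}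

/-- `S` is a `k`-dimensional simplex. -/
def IsSimplexDim {n : ℕ} (k : ℕ) (S : Set (V n)) : Prop :=
  ∃ v : Fin (k + 1) → V n, AffineIndependent ℝ v ∧ S = convexHull ℝ (Set.range v)

/-- Helly property with parameter `k` for translates of `B`. -/
def HellyProp {n : ℕ} (B : Set (V n)) (k : ℕ) : Prop :=
  ∀ X : Set (V n), X.Nonempty →
    (∀ J : Finset (V n), ↑J ⊆ X → J.card ≤ k + 1 →
      (⋂ x ∈ (J : Set (V n)), (x +ᵥ B)).Nonempty) →
    (⋂ x ∈ X, (x +ᵥ B)).Nonempty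

/-- Helly dimension of `B`: the least positive `k` with the Helly property. -/
noncomputable def hellyDim {n : ℕ} (B : Set (V n)) : ℕ :=
  sInf {k : ℕ | 0 < k ∧ HellyProp B k}

/-- `K` is of constant width w.r.t. the unit ball `B`: `K - K` is a dilate of `B`. -/
def IsConstWidth {n : ℕ} (B K : Set (V n)) : Prop :=
  ∃ γ : ℝ, 0 < γ ∧ K - K = γ • B

/-- A regular `n`-simplex in Euclidean space. -/
def IsRegularSimplex {n : ℕ} (T : Set (V n)) : Prop :=
  ∃ v : Fin (n + 1) → V n, AffineIndependent ℝ v ∧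
    (∀ i j k l, i ≠ j → k ≠ l → dist (v i) (v j) = dist (v k) (v l)) ∧
    T = convexHull ℝ (Set.range v)

/-- The Euclidean unit ball in `ℝ^n`. -/
noncomputable def euclBall (n : ℕ) : Set (V n) := Metric.closedBall 0 1

/-- Pseudo completion of `K` with respect to the circumcenter `c`. -/
noncomputable def pseudoCompletion {n : ℕ} (B K : Set (V n)) (c : V n) : Set (V n) :=
  convexHull ℝ (K ∪ (c +ᵥ (mdiam B K - circum B K) • B))

/-! If `-K ⊆ z + ρ K`, then every `x ∈ K` has a partner `y ∈ K` with `-x = z + ρ y`, and with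
`c = -z / (ρ + 1)` one computes `x - c = ρ / (ρ + 1) • (x - y)`. Hence `K` lies in the ball of
radius `ρ / (ρ + 1) · D(K)` around `c`, i.e. `R(K) (ρ + 1) ≤ D(K) ρ`. This inequality is closed
in `ρ`, so it passes to the infimum `s(K)` of all admissible `ρ`. -/

open Topology

section TopologicalVectorSpace

variable {E : Type*} [AddCommGroup E] [Module ℝ E] [TopologicalSpace E]
  [IsTopologicalAddGroup E] [ContinuousSMul ℝ E]

theorem Convex.mem_nhds_zero_of_neg_eq {B : Set E} (hB : Convex ℝ B) (hneg : B = -B)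
    (hint : (interior B).Nonempty) : B ∈ 𝓝 0 := by
  obtain ⟨x, hx⟩ := hint
  have hnx : -x ∈ interior B :=
    interior_maximal ((neg_subset_neg.mpr interior_subset).trans hneg.symm.subset)
      isOpen_interior.neg (neg_mem_neg.mpr hx)
  have := hB.interior hx hnx (by norm_num : (0 : ℝ) ≤ 1 / 2) (by norm_num : (0 : ℝ) ≤ 1 / 2)
    (by norm_num)
  rw [← smul_add, add_neg_cancel, smul_zero] at this
  exact mem_interior_iff_mem_nhds.mp this

end TopologicalVectorSpace

section NormedSpace

variable {E : Type*} [NormedAddCommGroup E] [NormedSpace ℝ E]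

theorem Bornology.IsBounded.exists_neg_subset_vadd_smul {K : Set E}
    (hK : Bornology.IsBounded K) (hint : (interior K).Nonempty) :
    ∃ ρ : ℝ, 0 < ρ ∧ ∃ c : E, -K ⊆ c +ᵥ ρ • K := by
  obtain ⟨p, hp⟩ := hint
  have hU : -p +ᵥ K ∈ 𝓝 (0 : E) := by
    simpa using (vadd_mem_nhds_vadd_iff (-p)).mpr (mem_interior_iff_mem_nhds.mp hp)
  have hA : Bornology.IsVonNBounded ℝ (-(-p +ᵥ K)) :=
    (((NormedSpace.isVonNBounded_iff ℝ).mpr hK).vadd (-p)).neg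
  obtain ⟨r, hr⟩ := absorbs_iff_norm.mp (hA hU)
  set ρ := max r 1
  refine ⟨ρ, by positivity, -p - ρ • p, fun w hw => ?_⟩
  have hw' : p + w ∈ -(-p +ᵥ K) := by
    rw [mem_neg, neg_add]
    exact vadd_mem_vadd_set (mem_neg.mp hw)
  obtain ⟨u, ⟨k, hk, rfl⟩, hku⟩ :=
    hr ρ ((le_max_left r 1).trans (le_abs_self ρ)) hw'
  refine ⟨ρ • k, smul_mem_smul_set hk, ?_⟩
  simp only [vadd_eq_add] at hku ⊢
  linear_combination (norm := module) hku

end NormedSpace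

section Minkowski

variable {n : ℕ} {B K : Set (V n)}

theorem gauge_sub_le_mdiam (hBc : Convex ℝ B) (hB0 : B ∈ 𝓝 0) (hK : IsCompact K)
    {x y : V n} (hx : x ∈ K) (hy : y ∈ K) : gauge B (x - y) ≤ mdiam B K := by
  have hcont : Continuous fun p : V n × V n => gauge B (p.1 - p.2) :=
    (continuous_gauge hBc hB0).comp continuous_sub
  refine le_csSup (((hK.prod hK).image hcont).bddAbove.mono ?_) ⟨x, hx, y, hy, rfl⟩
  rintro _ ⟨x, hx, y, hy, rfl⟩
  exact ⟨(x, y), ⟨hx, hy⟩, rfl⟩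

theorem circum_le_of_gauge_sub_le (hBc : Convex ℝ B) (hB0 : B ∈ 𝓝 0) (hK : K.Nonempty)
    {c : V n} {r : ℝ} (h : ∀ x ∈ K, gauge B (x - c) ≤ r) : circum B K ≤ r := by
  obtain ⟨x₀, hx₀⟩ := hK
  have hr : 0 ≤ r := (gauge_nonneg _).trans (h x₀ hx₀)
  refine le_of_forall_pos_le_add fun ε hε =>
    csInf_le ⟨0, fun ρ hρ => hρ.1.le⟩ ⟨by positivity, c, fun x hx => ?_⟩
  have hrε : 0 < r + ε := by positivity
  rw [mem_vadd_set_iff_neg_vadd_mem, mem_smul_set_iff_inv_smul_mem₀ hrε.ne']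
  refine setOfPred_gauge_lt_one_subset_self hBc (mem_of_mem_nhds hB0)
    (absorbent_nhds_zero hB0) ?_
  change gauge B _ < 1
  rw [gauge_smul_of_nonneg (inv_nonneg.mpr hrε.le), vadd_eq_add, neg_add_eq_sub, smul_eq_mul,
    inv_mul_lt_one₀ hrε]
  linarith [h x hx]

theorem circum_mul_add_one_le_of_neg_subset (hBc : Convex ℝ B) (hB0 : B ∈ 𝓝 0)
    (hK : IsCompact K) (hKne : K.Nonempty) {ρ : ℝ} (hρ : 0 < ρ) {z : V n}
    (h : -K ⊆ z +ᵥ ρ • K) : circum B K * (ρ + 1) ≤ mdiam B K * ρ := by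
  have hρ1 : 0 < ρ + 1 := by linarith
  have hcirc : circum B K ≤ ρ / (ρ + 1) * mdiam B K := by
    refine circum_le_of_gauge_sub_le hBc hB0 hKne (c := -(ρ + 1)⁻¹ • z) fun x hx => ?_
    obtain ⟨_, ⟨y, hy, rfl⟩, hxy⟩ := h (neg_mem_neg.mpr hx)
    have hxc : x - -(ρ + 1)⁻¹ • z = (ρ / (ρ + 1)) • (x - y) := by
      change z + ρ • y = -x at hxy
      rw [← neg_eq_iff_eq_neg] at hxy
      rw [← hxy]
      match_scalars <;> field_simp <;> ring
    rw [hxc, gauge_smul_of_nonneg (by positivity), smul_eq_mul]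
    exact mul_le_mul_of_nonneg_left (gauge_sub_le_mdiam hBc hB0 hK hx hy) (by positivity)
  calc circum B K * (ρ + 1) ≤ ρ / (ρ + 1) * mdiam B K * (ρ + 1) := by gcongr
    _ = mdiam B K * ρ := by field_simp

end Minkowski

/-- `j(K) ≤ s(K)/(s(K)+1)`, i.e. `R(K)(s(K)+1) ≤ D(K)s(K)`. -/
theorem stmt18 {n : ℕ} (B K : Set (V n)) (hB : IsSymUnitBall B)
    (hK : IsConvexBody K) :
    circum B K * (asym K + 1) ≤ mdiam B K * asym K := by
  obtain ⟨⟨hBc, -, hBint⟩, hBneg⟩ := hB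
  obtain ⟨-, hKc, hKint⟩ := hK
  have hB0 : B ∈ 𝓝 0 := hBc.mem_nhds_zero_of_neg_eq hBneg hBint
  have hKne : K.Nonempty := hKint.mono interior_subset
  have hclosed : IsClosed {ρ : ℝ | circum B K * (ρ + 1) ≤ mdiam B K * ρ} :=
    isClosed_le (by fun_prop) (by fun_prop)
  have hbound : {ρ : ℝ | 0 < ρ ∧ ∃ c : V n, -K ⊆ c +ᵥ ρ • K} ⊆
      {ρ : ℝ | circum B K * (ρ + 1) ≤ mdiam B K * ρ} := by
    rintro ρ ⟨hρ, z, hz⟩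
    exact circum_mul_add_one_le_of_neg_subset hBc hB0 hKc hKne hρ hz
  obtain ⟨ρ, hρ⟩ := hKc.isBounded.exists_neg_subset_vadd_smul hKint
  exact hclosed.closure_subset_iff.mpr hbound (csInf_mem_closure ⟨ρ, hρ⟩ ⟨0, fun _ h => h.1.le⟩)
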